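/- For an odd prime p and n ≥ 1, the number of orbits of the Borel subgroup Γ₀(ℤ/pⁿℤ) acting on F_sp(ℤ/pⁿℤ) = {(P₁,P₂) ∈ ℙ¹(ℤ/pⁿℤ)² : P₁ and P₂ have distinct reductions modulo p} is exactly 4n. -/

import Mathlib

open Matrix

/-- The Borel subgroup `Γ₀(R)` of upper triangular matrices in `SL₂(R)`. -/
def Gamma0 (R : Type*) [CommRing R] : Subgroup (Matrix.SpecialLinearGroup (Fin 2) R) where
  carrier := {A | A.1 1 0 = 0}
  one_mem' := by simp [Matrix.one_apply]
  mul_mem' := by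
    intro a b ha hb
    simp only [Set.mem_setOf_eq] at *
    have : ((a * b : Matrix.SpecialLinearGroup (Fin 2) _)).1 1 0
        = a.1 1 0 * b.1 0 0 + a.1 1 1 * b.1 1 0 := by
      simp [Matrix.mul_apply, Fin.sum_univ_two]
    rw [this, ha, hb]; ring
  inv_mem' := by
    intro a ha
    simp only [Set.mem_setOf_eq] at *
    rw [Matrix.SpecialLinearGroup.SL2_inv_expl]
    simp [ha]

/-- A pair is unimodular (over a local ring) if one of its entries is a unit. -/
def IsUnimodular {R : Type*} [CommRing R] (v : Fin 2 → R) : Prop :=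
  IsUnit (v 0) ∨ IsUnit (v 1)

def P1Setoid (R : Type*) [CommRing R] : Setoid {v : Fin 2 → R // IsUnimodular v} where
  r x y := ∃ u : Rˣ, u • x.1 = y.1
  iseqv := by
    refine ⟨fun x => ⟨1, one_smul _ _⟩, ?_, ?_⟩
    · rintro x y ⟨u, h⟩
      exact ⟨u⁻¹, by rw [← h, inv_smul_smul]⟩
    · rintro x y z ⟨u, h⟩ ⟨w, h2⟩
      exact ⟨w * u, by rw [← h2, ← h]; exact (smul_smul w u x.1).symm ▸ rfl⟩

/-- The projective line over `R`: unimodular pairs up to unit scaling. -/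
def P1 (R : Type*) [CommRing R] := Quotient (P1Setoid R)

def P1.mk {R : Type*} [CommRing R] (v : Fin 2 → R) (h : IsUnimodular v) : P1 R :=
  Quotient.mk (P1Setoid R) ⟨v, h⟩

theorem isUnimodular_mulVec {R : Type*} [CommRing R] [IsLocalRing R]
    (g : Matrix.SpecialLinearGroup (Fin 2) R) {v : Fin 2 → R} (hv : IsUnimodular v) :
    IsUnimodular (g.1.mulVec v) := by
  by_contra h
  rw [IsUnimodular, not_or] at h
  obtain ⟨h0, h1⟩ := h
  have hv' : v = (g⁻¹).1.mulVec (g.1.mulVec v) := by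
    rw [Matrix.mulVec_mulVec, ← Matrix.SpecialLinearGroup.coe_mul, inv_mul_cancel]
    simp
  have key : ∀ i, ¬ IsUnit (v i) := by
    intro i
    rw [hv']
    have hexp : (g⁻¹).1.mulVec (g.1.mulVec v) i
        = (g⁻¹).1 i 0 * (g.1.mulVec v 0) + (g⁻¹).1 i 1 * (g.1.mulVec v 1) := by
      simp [Matrix.mulVec, dotProduct, Fin.sum_univ_two]
    rw [hexp]
    intro hu
    have m0 : (g⁻¹).1 i 0 * (g.1.mulVec v 0) ∈ nonunits R := by
      intro hc
      exact h0 (isUnit_of_mul_isUnit_right hc)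
    have m1 : (g⁻¹).1 i 1 * (g.1.mulVec v 1) ∈ nonunits R := by
      intro hc
      exact h1 (isUnit_of_mul_isUnit_right hc)
    exact (IsLocalRing.nonunits_add m0 m1) hu
  rcases hv with h | h
  · exact key 0 h
  · exact key 1 h

noncomputable instance P1.smul {R : Type*} [CommRing R] [IsLocalRing R] :
    SMul (Matrix.SpecialLinearGroup (Fin 2) R) (P1 R) where
  smul g := Quotient.map
    (fun v => ⟨g.1.mulVec v.1, isUnimodular_mulVec g v.2⟩)
    (by
      rintro x y ⟨u, h⟩
      refine ⟨u, ?_⟩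
      simp only [← h]
      rw [Units.smul_def, Units.smul_def, Matrix.mulVec_smul])

theorem P1.smul_mk {R : Type*} [CommRing R] [IsLocalRing R]
    (g : Matrix.SpecialLinearGroup (Fin 2) R) (v : Fin 2 → R) (h : IsUnimodular v) :
    g • (P1.mk v h) = P1.mk (g.1.mulVec v) (isUnimodular_mulVec g h) := rfl

noncomputable instance P1.mulAction {R : Type*} [CommRing R] [IsLocalRing R] :
    MulAction (Matrix.SpecialLinearGroup (Fin 2) R) (P1 R) where
  one_smul := by
    intro x
    induction x using Quotient.ind with
    | _ v =>
      show Quotient.map _ _ _ = _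
      rw [Quotient.map_mk]
      congr 1
      exact Subtype.ext (by simp)
  mul_smul := by
    intro g h x
    induction x using Quotient.ind with
    | _ v =>
      show Quotient.map _ _ _ = Quotient.map _ _ (Quotient.map _ _ _)
      rw [Quotient.map_mk, Quotient.map_mk, Quotient.map_mk]
      congr 1
      exact Subtype.ext (by first
        | simp only [Matrix.SpecialLinearGroup.coe_mul, Matrix.mulVec_mulVec]
        | (simp [Matrix.mul_apply, Fin.sum_univ_two]; constructor <;> ring))

theorem zmod_pow_isUnit_iff (p : ℕ) [hp : Fact p.Prime] (n : ℕ) [NeZero n]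
    (x : ZMod (p^n)) : IsUnit x ↔ ¬ (p ∣ x.val) := by
  haveI : NeZero (p^n) := ⟨pow_ne_zero n hp.out.ne_zero⟩
  conv_lhs => rw [← ZMod.natCast_rightInverse x]
  rw [ZMod.isUnit_iff_coprime]
  rw [Nat.coprime_pow_right_iff (Nat.pos_of_ne_zero (NeZero.ne n))]
  rw [Nat.coprime_comm]
  exact hp.out.coprime_iff_not_dvd

instance zmod_pow_isLocalRing (p : ℕ) [hp : Fact p.Prime] (n : ℕ) [NeZero n] :
    IsLocalRing (ZMod (p^n)) := by
  haveI : NeZero (p^n) := ⟨pow_ne_zero n hp.out.ne_zero⟩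
  haveI : Fact (1 < p^n) :=
    ⟨Nat.one_lt_pow (NeZero.ne n) hp.out.one_lt⟩
  refine IsLocalRing.of_nonunits_add ?_
  intro a b ha hb
  rw [mem_nonunits_iff, zmod_pow_isUnit_iff, not_not] at ha hb ⊢
  rw [ZMod.val_add]
  rw [Nat.dvd_mod_iff (dvd_pow_self p (NeZero.ne n))]
  exact Nat.dvd_add ha hb

theorem isUnimodular_pair_left {R : Type*} [CommRing R] {a b : R} (h : IsUnit a) :
    IsUnimodular ![a, b] := Or.inl (by simpa using h)

theorem isUnimodular_pair_right {R : Type*} [CommRing R] {a b : R} (h : IsUnit b) :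
    IsUnimodular ![a, b] := Or.inr (by simpa using h)

/-- Reduction map `ℙ¹(ℤ/pⁿℤ) → ℙ¹(ℤ/pℤ)`. -/
noncomputable def P1.red (p : ℕ) [Fact p.Prime] (n : ℕ) [NeZero n] :
    P1 (ZMod (p ^ n)) → P1 (ZMod p) :=
  Quotient.map
    (fun v => ⟨(ZMod.castHom (dvd_pow_self p (NeZero.ne n)) (ZMod p)) ∘ v.1, by
      rcases v.2 with h | h
      · exact Or.inl (by simpa using h.map (ZMod.castHom (dvd_pow_self p (NeZero.ne n)) (ZMod p)))
      · exact Or.inr (by simpa using h.map (ZMod.castHom (dvd_pow_self p (NeZero.ne n)) (ZMod p)))⟩)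
    (by
      rintro x y ⟨u, h⟩
      refine ⟨Units.map (ZMod.castHom (dvd_pow_self p (NeZero.ne n)) (ZMod p)) u, ?_⟩
      funext i
      simp only [← h, Pi.smul_apply, Units.smul_def, Function.comp_apply, Units.coe_map,
        MonoidHom.coe_coe, smul_eq_mul, _root_.map_mul])

theorem P1.red_smul (p : ℕ) [Fact p.Prime] (n : ℕ) [NeZero n]
    (g : Matrix.SpecialLinearGroup (Fin 2) (ZMod (p ^ n))) (x : P1 (ZMod (p ^ n))) :
    P1.red p n (g • x)
      = (Matrix.SpecialLinearGroup.map
          (ZMod.castHom (dvd_pow_self p (NeZero.ne n)) (ZMod p)) g) • P1.red p n x := by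
  induction x using Quotient.ind with
  | _ v =>
    show Quotient.map _ _ (Quotient.map _ _ _) = Quotient.map _ _ (Quotient.map _ _ _)
    rw [Quotient.map_mk, Quotient.map_mk, Quotient.map_mk, Quotient.map_mk]
    congr 1
    refine Subtype.ext ?_
    funext i
    simp only [Matrix.mulVec, dotProduct, Fin.sum_univ_two, Function.comp_apply,
      Matrix.SpecialLinearGroup.map_apply_coe, RingHom.mapMatrix_apply, Matrix.map_apply,
      _root_.map_add, _root_.map_mul]

/-- Pairs of points of `ℙ¹(ℤ/pⁿℤ)` with distinct reductions mod `p`. -/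
def Fsp (p : ℕ) [Fact p.Prime] (n : ℕ) [NeZero n] : Type _ :=
  {x : P1 (ZMod (p ^ n)) × P1 (ZMod (p ^ n)) // P1.red p n x.1 ≠ P1.red p n x.2}

noncomputable instance Fsp.smul (p : ℕ) [Fact p.Prime] (n : ℕ) [NeZero n] :
    SMul (Matrix.SpecialLinearGroup (Fin 2) (ZMod (p ^ n))) (Fsp p n) :=
  ⟨fun g x => ⟨(g • x.1.1, g • x.1.2), by
    rw [P1.red_smul, P1.red_smul]
    intro hc
    exact x.2 (MulAction.injective _ hc)⟩⟩

noncomputable instance Fsp.mulAction (p : ℕ) [Fact p.Prime] (n : ℕ) [NeZero n] :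
    MulAction (Matrix.SpecialLinearGroup (Fin 2) (ZMod (p ^ n))) (Fsp p n) where
  one_smul x := Subtype.ext (Prod.ext (one_smul _ _) (one_smul _ _))
  mul_smul g h x := Subtype.ext (Prod.ext (mul_smul g h x.1.1) (mul_smul g h x.1.2))


/-!
Write `g ∈ Γ₀` as `[[a, b], [0, a⁻¹]]`. For a pair `([x₁ : y₁], [x₂ : y₂])` whose determinant
`d = x₁ y₂ - x₂ y₁` is a unit (distinct reductions), `g` keeps `y₁` a unit or a non-unit and
multiplies `t = y₁ y₂ / d` by `a⁻²`. Conversely a unipotent element moves the pair to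
`([0 : 1], [-1 : t])` when `y₁` is a unit, and to `([1 : t], [0 : 1])` otherwise (then `y₂` is a
unit and `t` is not); the diagonal torus rescales `t` by any unit square. So the orbits are the
square classes of all `t ∈ ℤ/pⁿ` plus those of the non-units `t`. By Hensel's lemma a unit is a
square iff it is one mod `p`, so the units form two classes; every nonzero element is `u pᵏ`
with `k < n` unique and `u` determined mod `p`. This gives `2n + 1` classes, `2n - 1` of them
non-units, hence `4n` orbits.
-/
open IsLocalRing
open scoped MatrixGroups

namespace P1

variable {S : Type*} [CommRing S]

theorem mk_eq_mk_iff {v w : Fin 2 → S} (hv : IsUnimodular v) (hw : IsUnimodular w) :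
    P1.mk v hv = P1.mk w hw ↔ ∃ u : Sˣ, u • v = w :=
  Quotient.eq

theorem mk_eq_mk_of_eq_smul {v w : Fin 2 → S} (hv : IsUnimodular v) (hw : IsUnimodular w)
    (u : Sˣ) (h0 : w 0 = u * v 0) (h1 : w 1 = u * v 1) : P1.mk v hv = P1.mk w hw :=
  (mk_eq_mk_iff hv hw).2 ⟨u, funext <| Fin.forall_fin_two.2 ⟨h0.symm, h1.symm⟩⟩

theorem exists_mk (P : P1 S) : ∃ v hv, P1.mk v hv = P :=
  Quotient.inductionOn P fun v => ⟨v.1, v.2, rfl⟩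

end P1

section PairDet

variable {S : Type*} [CommRing S]

def pairDet (v w : Fin 2 → S) : S := v 0 * w 1 - w 0 * v 1

theorem pairDet_smul (a b : S) (v w : Fin 2 → S) :
    pairDet (a • v) (b • w) = a * b * pairDet v w := by
  simp only [pairDet, Pi.smul_apply, smul_eq_mul]
  ring

theorem pairDet_mulVec (g : SL(2, S)) (v w : Fin 2 → S) :
    pairDet (g.1 *ᵥ v) (g.1 *ᵥ w) = pairDet v w := by
  have hdet := g.2
  rw [Matrix.det_fin_two] at hdet
  simp only [pairDet, Matrix.mulVec, dotProduct, Fin.sum_univ_two]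
  linear_combination (v 0 * w 1 - w 0 * v 1) * hdet

theorem IsUnimodular.exists_ne_zero [Nontrivial S] {v : Fin 2 → S} (hv : IsUnimodular v) :
    ∃ i, v i ≠ 0 :=
  hv.elim (fun h => ⟨0, h.ne_zero⟩) (fun h => ⟨1, h.ne_zero⟩)

theorem P1.mk_eq_mk_iff_pairDet_eq_zero {K : Type*} [Field K] {v w : Fin 2 → K}
    (hv : IsUnimodular v) (hw : IsUnimodular w) : P1.mk v hv = P1.mk w hw ↔ pairDet v w = 0 := by
  refine ⟨fun h => ?_, fun h => ?_⟩
  · obtain ⟨u, rfl⟩ := (P1.mk_eq_mk_iff hv hw).1 h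
    simp only [pairDet, Pi.smul_apply, Units.smul_def, smul_eq_mul]
    ring
  have cross : ∀ i j, v i * w j = w i * v j := by
    simp only [Fin.forall_fin_two]
    simp only [pairDet] at h
    exact ⟨⟨by ring, by linear_combination h⟩, by linear_combination -h, by ring⟩
  obtain ⟨i, hvi⟩ := hv.exists_ne_zero
  have hwi : w i ≠ 0 := by
    obtain ⟨j, hwj⟩ := hw.exists_ne_zero
    intro hwi
    exact hwj (by simpa [hwi, hvi] using cross i j)
  refine (P1.mk_eq_mk_iff hv hw).2
    ⟨Units.mk0 (w i / v i) (div_ne_zero hwi hvi), funext fun j => ?_⟩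
  simp only [Pi.smul_apply, Units.smul_def, Units.val_mk0, smul_eq_mul]
  field_simp
  linear_combination (cross i j).symm

end PairDet

namespace P1

variable {S : Type*} [CommRing S]

/-- Over `ℤ/pⁿℤ`: the reduction of the point is not `[1 : 0]`. -/
def IsUnitSnd : P1 S → Prop :=
  Quotient.lift (fun v => IsUnit (v.1 1)) (by
    rintro v ⟨_, _⟩ ⟨u, rfl⟩
    simp [Units.smul_def])

def Transverse : P1 S → P1 S → Prop :=
  Quotient.lift₂ (fun v w => IsUnit (pairDet v.1 w.1)) (by
    rintro v w ⟨_, _⟩ ⟨_, _⟩ ⟨a, rfl⟩ ⟨b, rfl⟩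
    simp [Units.smul_def, pairDet_smul, ← Units.val_mul])

/-- `y₁ y₂ / det`, the `Γ₀`-invariant up to unit squares; `Ring.inverse` gives `0` unless the
pair is `Transverse`. -/
noncomputable def borelInv : P1 S → P1 S → S :=
  Quotient.lift₂ (fun v w => v.1 1 * w.1 1 * Ring.inverse (pairDet v.1 w.1)) (by
    rintro v w ⟨_, _⟩ ⟨_, _⟩ ⟨a, rfl⟩ ⟨b, rfl⟩
    simp only [Units.smul_def, pairDet_smul, Ring.mul_inverse_rev, Ring.inverse_unit,
      Pi.smul_apply, smul_eq_mul]
    set t := v.1 1 * w.1 1 * Ring.inverse (pairDet v.1 w.1)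
    linear_combination -t * (b * ↑b⁻¹ : S) * a.mul_inv - t * b.mul_inv)

theorem isUnitSnd_mk {v : Fin 2 → S} (hv : IsUnimodular v) :
    (P1.mk v hv).IsUnitSnd ↔ IsUnit (v 1) := Iff.rfl

theorem transverse_mk {v w : Fin 2 → S} (hv : IsUnimodular v) (hw : IsUnimodular w) :
    (P1.mk v hv).Transverse (P1.mk w hw) ↔ IsUnit (pairDet v w) := Iff.rfl

theorem borelInv_mk {v w : Fin 2 → S} (hv : IsUnimodular v) (hw : IsUnimodular w) :
    (P1.mk v hv).borelInv (P1.mk w hw) = v 1 * w 1 * Ring.inverse (pairDet v w) := rfl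

theorem not_isUnit_borelInv {P : P1 S} (hP : ¬P.IsUnitSnd) (Q : P1 S) :
    ¬IsUnit (P.borelInv Q) := by
  obtain ⟨v, hv, rfl⟩ := P.exists_mk
  obtain ⟨w, hw, rfl⟩ := Q.exists_mk
  rw [borelInv_mk, mul_assoc]
  exact fun h => hP (isUnit_of_mul_isUnit_left h)

end P1

namespace Gamma0

variable {S : Type*} [CommRing S]

theorem mem_iff {g : SL(2, S)} : g ∈ Gamma0 S ↔ g.1 1 0 = 0 :=
  Iff.rfl

theorem isUnit_apply_one_one (g : Gamma0 S) : IsUnit ((g : SL(2, S)).1 1 1) := by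
  have hdet := (g : SL(2, S)).2
  rw [Matrix.det_fin_two, mem_iff.1 g.2, mul_zero, sub_zero, mul_comm] at hdet
  exact IsUnit.of_mul_eq_one _ hdet

theorem mulVec_apply_one (g : Gamma0 S) (v : Fin 2 → S) :
    ((g : SL(2, S)).1 *ᵥ v) 1 = (g : SL(2, S)).1 1 1 * v 1 := by
  simp [Matrix.mulVec, dotProduct, Fin.sum_univ_two, mem_iff.1 g.2]

def upper (a : Sˣ) (b : S) : Gamma0 S :=
  ⟨⟨!![(a : S), b; 0, ↑a⁻¹], by simp [Matrix.det_fin_two_of]⟩, rfl⟩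

theorem upper_mulVec (a : Sˣ) (b : S) (v : Fin 2 → S) :
    (upper a b : SL(2, S)).1 *ᵥ v = ![a * v 0 + b * v 1, ↑a⁻¹ * v 1] := by
  ext i
  fin_cases i <;> simp [upper, Matrix.mulVec, dotProduct, Fin.sum_univ_two]

end Gamma0

namespace P1

variable {S : Type*} [CommRing S] [IsLocalRing S]

theorem gamma0_smul_mk (g : Gamma0 S) {v : Fin 2 → S} (hv : IsUnimodular v) :
    g • P1.mk v hv = P1.mk ((g : SL(2, S)).1 *ᵥ v) (isUnimodular_mulVec g hv) :=
  rfl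

theorem isUnitSnd_smul (g : Gamma0 S) (P : P1 S) : (g • P).IsUnitSnd ↔ P.IsUnitSnd := by
  obtain ⟨v, hv, rfl⟩ := P.exists_mk
  rw [gamma0_smul_mk, isUnitSnd_mk, isUnitSnd_mk, Gamma0.mulVec_apply_one]
  exact (Gamma0.isUnit_apply_one_one g).mul_left_iff

theorem borelInv_smul (g : Gamma0 S) (P Q : P1 S) :
    (g • P).borelInv (g • Q) = (g : SL(2, S)).1 1 1 ^ 2 * P.borelInv Q := by
  obtain ⟨v, hv, rfl⟩ := P.exists_mk
  obtain ⟨w, hw, rfl⟩ := Q.exists_mk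
  rw [gamma0_smul_mk, gamma0_smul_mk, borelInv_mk, borelInv_mk, pairDet_mulVec,
    Gamma0.mulVec_apply_one, Gamma0.mulVec_apply_one]
  ring

theorem Transverse.isUnitSnd_right {P Q : P1 S} (hPQ : P.Transverse Q) (hP : ¬P.IsUnitSnd) :
    Q.IsUnitSnd := by
  obtain ⟨v, hv, rfl⟩ := P.exists_mk
  obtain ⟨w, hw, rfl⟩ := Q.exists_mk
  by_contra hQ
  refine (mem_maximalIdeal _).1 ?_ hPQ
  exact (maximalIdeal S).sub_mem (Ideal.mul_mem_left _ _ ((mem_maximalIdeal _).2 hQ))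
    (Ideal.mul_mem_left _ _ ((mem_maximalIdeal _).2 hP))

end P1

section NormalForm

variable {S : Type*} [CommRing S]

def normalFormFst (t : S) : P1 S × P1 S :=
  (P1.mk ![0, 1] (isUnimodular_pair_right isUnit_one),
    P1.mk ![-1, t] (isUnimodular_pair_left isUnit_one.neg))

def normalFormSnd (t : S) : P1 S × P1 S :=
  (P1.mk ![1, t] (isUnimodular_pair_left isUnit_one),
    P1.mk ![0, 1] (isUnimodular_pair_right isUnit_one))

theorem transverse_normalFormFst (t : S) :
    (normalFormFst t).1.Transverse (normalFormFst t).2 := by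
  simp [normalFormFst, P1.transverse_mk, pairDet]

theorem transverse_normalFormSnd (t : S) :
    (normalFormSnd t).1.Transverse (normalFormSnd t).2 := by
  simp [normalFormSnd, P1.transverse_mk, pairDet]

theorem borelInv_normalFormFst (t : S) : (normalFormFst t).1.borelInv (normalFormFst t).2 = t := by
  simp [normalFormFst, P1.borelInv_mk, pairDet]

theorem borelInv_normalFormSnd (t : S) : (normalFormSnd t).1.borelInv (normalFormSnd t).2 = t := by
  simp [normalFormSnd, P1.borelInv_mk, pairDet]

theorem isUnitSnd_normalFormFst_fst (t : S) : (normalFormFst t).1.IsUnitSnd := by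
  simp [normalFormFst, P1.isUnitSnd_mk]

theorem isUnitSnd_normalFormSnd_fst (t : S) : (normalFormSnd t).1.IsUnitSnd ↔ IsUnit t := by
  simp [normalFormSnd, P1.isUnitSnd_mk]

variable [IsLocalRing S]

theorem upper_smul_normalFormFst (a : Sˣ) (t : S) :
    Gamma0.upper a 0 • normalFormFst ((a : S) ^ 2 * t) = normalFormFst t := by
  refine Prod.ext ?_ ?_
  · refine P1.mk_eq_mk_of_eq_smul _ _ a ?_ ?_ <;> simp only [Gamma0.upper_mulVec,
      Matrix.cons_val_zero, Matrix.cons_val_one, Matrix.cons_val_fin_one]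
    · ring
    · linear_combination -a.mul_inv
  · refine P1.mk_eq_mk_of_eq_smul _ _ a⁻¹ ?_ ?_ <;> simp only [Gamma0.upper_mulVec,
      Matrix.cons_val_zero, Matrix.cons_val_one, Matrix.cons_val_fin_one]
    · linear_combination a.inv_mul
    · linear_combination -t * (↑a⁻¹ * ↑a + 1 : S) * a.inv_mul

theorem upper_smul_normalFormSnd (a : Sˣ) (t : S) :
    Gamma0.upper a 0 • normalFormSnd ((a : S) ^ 2 * t) = normalFormSnd t := by
  refine Prod.ext ?_ ?_
  · refine P1.mk_eq_mk_of_eq_smul _ _ a⁻¹ ?_ ?_ <;> simp only [Gamma0.upper_mulVec,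
      Matrix.cons_val_zero, Matrix.cons_val_one, Matrix.cons_val_fin_one]
    · linear_combination -a.inv_mul
    · linear_combination -t * (↑a⁻¹ * ↑a + 1 : S) * a.inv_mul
  · refine P1.mk_eq_mk_of_eq_smul _ _ a ?_ ?_ <;> simp only [Gamma0.upper_mulVec,
      Matrix.cons_val_zero, Matrix.cons_val_one, Matrix.cons_val_fin_one]
    · ring
    · linear_combination -a.mul_inv

end NormalForm

section Normalization

variable {S : Type*} [CommRing S] [IsLocalRing S]

theorem exists_smul_eq_normalFormFst {P Q : P1 S} (hP : P.IsUnitSnd) (hPQ : P.Transverse Q) :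
    ∃ g : Gamma0 S, g • (P, Q) = normalFormFst (P.borelInv Q) := by
  obtain ⟨v, hv, rfl⟩ := P.exists_mk
  obtain ⟨w, hw, rfl⟩ := Q.exists_mk
  obtain ⟨y, hy⟩ : ∃ y : Sˣ, ↑y = v 1 := hP
  obtain ⟨d, hd⟩ : ∃ d : Sˣ, ↑d = pairDet v w := hPQ
  rw [P1.borelInv_mk, ← hd, Ring.inverse_unit, ← hy]
  rw [pairDet, ← hy] at hd
  refine ⟨Gamma0.upper 1 (-(v 0 * ↑y⁻¹)), Prod.ext ?_ ?_⟩
  · refine P1.mk_eq_mk_of_eq_smul _ _ y⁻¹ ?_ ?_ <;>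
      simp only [Gamma0.upper_mulVec, Matrix.cons_val_zero, Matrix.cons_val_one,
        Matrix.cons_val_fin_one, inv_one, Units.val_one, one_mul, ← hy]
    · linear_combination (↑y⁻¹ * v 0) * y.inv_mul
    · linear_combination -y.inv_mul
  · refine P1.mk_eq_mk_of_eq_smul _ _ (y * d⁻¹) ?_ ?_ <;>
      simp only [Gamma0.upper_mulVec, Matrix.cons_val_zero, Matrix.cons_val_one,
        Matrix.cons_val_fin_one, Units.val_mul, inv_one, Units.val_one, one_mul]
    · linear_combination (↑d⁻¹ * v 0 * w 1) * y.mul_inv + d.inv_mul - ↑d⁻¹ * hd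
    · ring

theorem exists_smul_eq_normalFormSnd {P Q : P1 S} (hQ : Q.IsUnitSnd) (hPQ : P.Transverse Q) :
    ∃ g : Gamma0 S, g • (P, Q) = normalFormSnd (P.borelInv Q) := by
  obtain ⟨v, hv, rfl⟩ := P.exists_mk
  obtain ⟨w, hw, rfl⟩ := Q.exists_mk
  obtain ⟨z, hz⟩ : ∃ z : Sˣ, ↑z = w 1 := hQ
  obtain ⟨d, hd⟩ : ∃ d : Sˣ, ↑d = pairDet v w := hPQ
  rw [P1.borelInv_mk, ← hd, Ring.inverse_unit, ← hz]
  rw [pairDet, ← hz] at hd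
  refine ⟨Gamma0.upper 1 (-(w 0 * ↑z⁻¹)), Prod.ext ?_ ?_⟩
  · refine P1.mk_eq_mk_of_eq_smul _ _ (z * d⁻¹) ?_ ?_ <;>
      simp only [Gamma0.upper_mulVec, Matrix.cons_val_zero, Matrix.cons_val_one,
        Matrix.cons_val_fin_one, Units.val_mul, inv_one, Units.val_one, one_mul]
    · linear_combination (↑d⁻¹ * w 0 * v 1) * z.mul_inv - d.inv_mul + ↑d⁻¹ * hd
    · ring
  · refine P1.mk_eq_mk_of_eq_smul _ _ z⁻¹ ?_ ?_ <;>
      simp only [Gamma0.upper_mulVec, Matrix.cons_val_zero, Matrix.cons_val_one,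
        Matrix.cons_val_fin_one, inv_one, Units.val_one, one_mul, ← hz]
    · linear_combination (↑z⁻¹ * w 0) * z.inv_mul
    · linear_combination -z.inv_mul

end Normalization

section SquareClasses

theorem isSquare_div_of_not_isSquare {K : Type*} [Field K] [Fintype K] [DecidableEq K] {a b : K}
    (ha : ¬IsSquare a) (hb : ¬IsSquare b) : IsSquare (a / b) := by
  have ha0 : a ≠ 0 := fun h => ha (h ▸ IsSquare.zero)
  have hb0 : b ≠ 0 := fun h => hb (h ▸ IsSquare.zero)
  rw [← quadraticChar_neg_one_iff_not_isSquare] at ha hb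
  rw [← quadraticChar_one_iff_isSquare (div_ne_zero ha0 hb0)]
  have hmul := map_mul (quadraticChar K) (a / b) b
  rw [div_mul_cancel₀ a hb0, ha, hb] at hmul
  linear_combination hmul

theorem IsArtinianRing.henselianLocalRing (R : Type*) [CommRing R] [IsLocalRing R]
    [IsArtinianRing R] : HenselianLocalRing R where
  is_henselian f hf a₀ h₁ h₂ := HenselianRing.is_henselian f hf a₀ h₁ (h₂.map _)

theorem isUnit_cond {M : Type*} [Monoid M] {c : M} (hc : IsUnit c) (e : Bool) :
    IsUnit (cond e c 1) := by
  cases e <;> simp [hc]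

variable {R K : Type*} [CommRing R] [Field K]

theorem isUnit_iff_map_ne_zero [IsLocalRing R] {φ : R →+* K} (hφ : Function.Surjective φ)
    {x : R} : IsUnit x ↔ φ x ≠ 0 := by
  rw [Ne, ← RingHom.mem_ker, ker_eq_maximalIdeal φ hφ, mem_maximalIdeal, mem_nonunits_iff,
    not_not]

open Polynomial in
theorem isSquare_of_isSquare_map [HenselianLocalRing R] {φ : R →+* K}
    (hφ : Function.Surjective φ) (h2 : (2 : K) ≠ 0) {u : R} (hu : φ u ≠ 0)
    (h : IsSquare (φ u)) : IsSquare u := by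
  obtain ⟨b, hb⟩ := h
  obtain ⟨a₀, rfl⟩ := hφ b
  have hmem : ∀ x : R, φ x = 0 → x ∈ maximalIdeal R := fun x hx =>
    (mem_maximalIdeal x).2 fun hunit => (isUnit_iff_map_ne_zero hφ).1 hunit hx
  obtain ⟨a, ha, -⟩ := HenselianLocalRing.is_henselian (X ^ 2 - C u)
    (monic_X_pow_sub_C u two_ne_zero) a₀
    (hmem _ (by simp [hb, sq]))
    ((isUnit_iff_map_ne_zero hφ).2 (by
      simp only [derivative_sub, derivative_X_pow_succ, Nat.cast_one, map_add, map_one, pow_one,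
        derivative_C, sub_zero, eval_mul, eval_add, eval_one, eval_X, map_mul, ne_eq, mul_eq_zero,
        not_or]
      exact ⟨by rwa [one_add_one_eq_two], fun h0 => hu (by simp [hb, h0])⟩))
  exact ⟨a, by simpa [sub_eq_zero, sq, eq_comm] using ha⟩

theorem exists_eq_sq_mul_cond_of_isUnit [HenselianLocalRing R] [Fintype K] [DecidableEq K]
    {φ : R →+* K} (hφ : Function.Surjective φ) (h2 : (2 : K) ≠ 0) {c : R}
    (hc : ¬IsSquare (φ c)) {u : R} (hu : IsUnit u) :
    ∃ (a : Rˣ) (e : Bool), u = a ^ 2 * cond e c 1 := by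
  have hu0 := (isUnit_iff_map_ne_zero hφ).1 hu
  obtain ⟨c, rfl⟩ : IsUnit c := (isUnit_iff_map_ne_zero hφ).2 fun h => hc (h ▸ IsSquare.zero)
  by_cases hsq : IsSquare (φ u)
  · obtain ⟨s, hs⟩ := isSquare_of_isSquare_map hφ h2 hu0 hsq
    refine ⟨(isUnit_of_mul_isUnit_left (hs ▸ hu)).unit, false, ?_⟩
    simp [hs, sq]
  · have hquot : IsSquare (φ (u * ↑c⁻¹)) := by
      rw [map_mul, map_units_inv, ← div_eq_mul_inv]
      exact isSquare_div_of_not_isSquare hsq hc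
    obtain ⟨s, hs⟩ := isSquare_of_isSquare_map hφ h2
      ((isUnit_iff_map_ne_zero hφ).1 (hu.mul c⁻¹.isUnit)) hquot
    refine ⟨(isUnit_of_mul_isUnit_left (hs ▸ hu.mul c⁻¹.isUnit)).unit, true, ?_⟩
    simp only [IsUnit.unit_spec, cond_true, sq, ← hs]
    simp

theorem cond_eq_of_map_sq_mul_eq {φ : R →+* K} {c : R} (hc : ¬IsSquare (φ c)) {a : R}
    (ha : φ a ≠ 0) {e f : Bool} (h : φ (a ^ 2 * cond e c 1) = φ (cond f c 1)) : e = f := by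
  cases e <;> cases f <;> simp only [cond_false, cond_true, mul_one, map_pow, map_one, map_mul] at h
  · rfl
  · exact absurd ⟨φ a, by rw [← h, sq]⟩ hc
  · refine absurd ⟨(φ a)⁻¹, ?_⟩ hc
    field_simp
    linear_combination h
  · rfl

end SquareClasses

section PrimePower

variable {p : ℕ} [hp : Fact p.Prime] {n : ℕ}

theorem prime_pow_ne_zero_of_lt {k : ℕ} (hk : k < n) : (p : ZMod (p ^ n)) ^ k ≠ 0 := by
  rw [← Nat.cast_pow, Ne, ZMod.natCast_eq_zero_iff, Nat.pow_dvd_pow_iff_le_right hp.out.one_lt]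
  omega

theorem unit_mul_prime_pow_ne_zero {u : ZMod (p ^ n)} (hu : IsUnit u) {k : ℕ} (hk : k < n) :
    u * (p : ZMod (p ^ n)) ^ k ≠ 0 := by
  rw [Ne, hu.mul_right_eq_zero]
  exact prime_pow_ne_zero_of_lt hk

/-- Indexes the non-unit values of `sqRep` below, those with exponent `k ≥ 1`. -/
def liftNonunitIdx : Option (Bool × Fin (n - 1)) → Option (Bool × Fin n) :=
  Option.map fun ek => (ek.1, ⟨ek.2 + 1, by have := ek.2.isLt; omega⟩)

theorem liftNonunitIdx_injective : Function.Injective (liftNonunitIdx (n := n)) :=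
  Option.map_injective fun _ _ h => by
    simp only [Prod.mk.injEq, Fin.mk.injEq, add_left_inj] at h
    exact Prod.ext h.1 (Fin.ext h.2)

variable [NeZero n]

local notation "ρ" => ZMod.castHom (dvd_pow_self p (NeZero.ne n)) (ZMod p)

instance : HenselianLocalRing (ZMod (p ^ n)) := IsArtinianRing.henselianLocalRing _

theorem castHom_prime_pow_surjective : Function.Surjective ρ := ZMod.castHom_surjective _

theorem isUnit_of_not_isSquare_castHom {c : ZMod (p ^ n)} (hc : ¬IsSquare (ρ c)) : IsUnit c :=
  (isUnit_iff_map_ne_zero castHom_prime_pow_surjective).2 fun h => hc (h ▸ IsSquare.zero)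

theorem exists_not_isSquare_castHom (hp2 : p ≠ 2) : ∃ c : ZMod (p ^ n), ¬IsSquare (ρ c) := by
  obtain ⟨c₀, hc₀⟩ :=
    FiniteField.exists_nonsquare (F := ZMod p) (by rwa [ZMod.ringChar_zmod_n])
  obtain ⟨c, rfl⟩ := castHom_prime_pow_surjective (n := n) c₀
  exact ⟨c, hc₀⟩

theorem castHom_prime_pow_eq_zero {k : ℕ} (hk : k ≠ 0) : ρ ((p : ZMod (p ^ n)) ^ k) = 0 := by
  rw [map_pow, map_natCast, ZMod.natCast_self, zero_pow hk]

theorem exists_eq_unit_mul_prime_pow {x : ZMod (p ^ n)} (hx : x ≠ 0) :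
    ∃ (u : ZMod (p ^ n)) (k : ℕ), IsUnit u ∧ k < n ∧ x = u * (p : ZMod (p ^ n)) ^ k := by
  have : NeZero (p ^ n) := ⟨pow_ne_zero n hp.out.ne_zero⟩
  obtain ⟨k, m, hpm, hxm⟩ :=
    Nat.exists_eq_pow_mul_and_not_dvd ((ZMod.val_ne_zero x).2 hx) p hp.out.one_lt.ne'
  have hk : p ^ k < p ^ n :=
    (Nat.le_of_dvd (Nat.pos_of_ne_zero ((ZMod.val_ne_zero x).2 hx)) ⟨m, hxm⟩).trans_lt x.val_lt
  refine ⟨m, k, (isUnit_iff_map_ne_zero castHom_prime_pow_surjective).2 ?_,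
    (Nat.pow_lt_pow_iff_right hp.out.one_lt).1 hk, ?_⟩
  · rwa [map_natCast, Ne, ZMod.natCast_eq_zero_iff]
  · rw [← ZMod.natCast_zmod_val x, hxm]
    push_cast
    ring

theorem eq_of_unit_mul_prime_pow_eq {u v : ZMod (p ^ n)} (hu : IsUnit u) (hv : IsUnit v)
    {j k : ℕ} (hj : j < n) (hk : k < n)
    (h : u * (p : ZMod (p ^ n)) ^ j = v * (p : ZMod (p ^ n)) ^ k) : j = k ∧ ρ u = ρ v := by
  wlog hjk : j ≤ k generalizing u v j k
  · exact (this hv hu hk hj h.symm (by omega)).imp Eq.symm Eq.symm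
  have hdiff : ¬IsUnit (u - v * (p : ZMod (p ^ n)) ^ (k - j)) := fun hunit =>
    prime_pow_ne_zero_of_lt hj <| hunit.mul_left_eq_zero.1 <| by
      have hpow : (p : ZMod (p ^ n)) ^ j * (p : ZMod (p ^ n)) ^ (k - j)
          = (p : ZMod (p ^ n)) ^ k := by
        rw [← pow_add, Nat.add_sub_cancel' hjk]
      linear_combination h - v * hpow
  rw [isUnit_iff_map_ne_zero castHom_prime_pow_surjective, not_not, map_sub, sub_eq_zero,
    map_mul] at hdiff
  obtain rfl : j = k := by
    by_contra hne
    rw [castHom_prime_pow_eq_zero (by omega), mul_zero] at hdiff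
    exact (isUnit_iff_map_ne_zero castHom_prime_pow_surjective).1 hu hdiff
  rw [Nat.sub_self, pow_zero, map_one, mul_one] at hdiff
  exact ⟨rfl, hdiff⟩

/-- Representatives of `ZMod (p ^ n)` modulo squares of units, given a unit `c` that is not a
square mod `p`: `none ↦ 0` and `(e, k) ↦ pᵏ` or `c pᵏ` according to `e`. -/
def sqRep (c : ZMod (p ^ n)) : Option (Bool × Fin n) → ZMod (p ^ n)
  | none => 0
  | some (e, k) => cond e c 1 * (p : ZMod (p ^ n)) ^ (k : ℕ)

theorem exists_eq_sq_mul_sqRep (hp2 : p ≠ 2) {c : ZMod (p ^ n)} (hc : ¬IsSquare (ρ c))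
    (x : ZMod (p ^ n)) : ∃ (a : (ZMod (p ^ n))ˣ) (i : Option (Bool × Fin n)),
      x = a ^ 2 * sqRep c i := by
  by_cases hx : x = 0
  · exact ⟨1, none, by simp [hx, sqRep]⟩
  obtain ⟨u, k, hu, hk, rfl⟩ := exists_eq_unit_mul_prime_pow hx
  obtain ⟨a, e, rfl⟩ := exists_eq_sq_mul_cond_of_isUnit castHom_prime_pow_surjective
    (Ring.two_ne_zero (by rwa [ZMod.ringChar_zmod_n])) hc hu
  exact ⟨a, some (e, ⟨k, hk⟩), by simp only [sqRep]; ring⟩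

theorem eq_of_sq_mul_sqRep_eq {c : ZMod (p ^ n)} (hc : ¬IsSquare (ρ c)) (a : (ZMod (p ^ n))ˣ)
    {i i' : Option (Bool × Fin n)} (h : a ^ 2 * sqRep c i = sqRep c i') : i = i' := by
  have hcu := isUnit_of_not_isSquare_castHom hc
  rcases i with _ | ⟨e, j⟩ <;> rcases i' with _ | ⟨f, k⟩ <;>
    simp only [sqRep, mul_zero] at h
  · rfl
  · exact absurd h.symm (unit_mul_prime_pow_ne_zero (isUnit_cond hcu f) k.2)
  · rw [← mul_assoc] at h
    exact absurd h (unit_mul_prime_pow_ne_zero ((a ^ 2).isUnit.mul (isUnit_cond hcu e)) j.2)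
  · rw [← mul_assoc] at h
    obtain ⟨hjk, hred⟩ := eq_of_unit_mul_prime_pow_eq ((a ^ 2).isUnit.mul (isUnit_cond hcu e))
      (isUnit_cond hcu f) j.2 k.2 h
    have ha : ρ a ≠ 0 := (isUnit_iff_map_ne_zero castHom_prime_pow_surjective).1 a.isUnit
    obtain rfl := cond_eq_of_map_sq_mul_eq hc ha (by simpa using hred)
    obtain rfl := Fin.ext hjk
    rfl

theorem not_isUnit_sqRep_liftNonunitIdx (c : ZMod (p ^ n)) (j : Option (Bool × Fin (n - 1))) :
    ¬IsUnit (sqRep c (liftNonunitIdx j)) := by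
  rw [isUnit_iff_map_ne_zero castHom_prime_pow_surjective, not_not]
  rcases j with _ | ⟨e, k⟩
  · simp [liftNonunitIdx, sqRep]
  · simp only [liftNonunitIdx, Option.map_some, sqRep, map_mul]
    rw [castHom_prime_pow_eq_zero (by omega), mul_zero]

theorem exists_liftNonunitIdx_eq {c : ZMod (p ^ n)} (hc : ¬IsSquare (ρ c))
    {i : Option (Bool × Fin n)} (hi : ¬IsUnit (sqRep c i)) : ∃ j, liftNonunitIdx j = i := by
  rcases i with _ | ⟨e, _ | k, hk⟩
  · exact ⟨none, rfl⟩
  · exact absurd (by simpa [sqRep] using isUnit_cond (isUnit_of_not_isSquare_castHom hc) e) hi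
  · exact ⟨some (e, ⟨k, by omega⟩), rfl⟩

theorem P1.red_ne_red_iff_transverse {P Q : P1 (ZMod (p ^ n))} :
    P1.red p n P ≠ P1.red p n Q ↔ P.Transverse Q := by
  obtain ⟨v, hv, rfl⟩ := P.exists_mk
  obtain ⟨w, hw, rfl⟩ := Q.exists_mk
  rw [P1.transverse_mk, isUnit_iff_map_ne_zero castHom_prime_pow_surjective]
  exact (P1.mk_eq_mk_iff_pairDet_eq_zero (v := ρ ∘ v) (w := ρ ∘ w) _ _).not.trans
    (by rw [pairDet, pairDet, map_sub, map_mul, map_mul]; rfl)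

theorem Fsp.orbitRel_iff {x y : Fsp p n} :
    MulAction.orbitRel (Gamma0 (ZMod (p ^ n))) (Fsp p n) x y ↔
      ∃ g : Gamma0 (ZMod (p ^ n)), g • y.1 = x.1 := by
  rw [MulAction.orbitRel_apply, MulAction.mem_orbit_iff]
  exact exists_congr fun g => Subtype.ext_iff

/-- One point in each `Γ₀`-orbit: `normalFormFst t` for every square class of `t`, and
`normalFormSnd t` for every square class of a non-unit `t`. -/
noncomputable def borelRep (c : ZMod (p ^ n)) :
    Option (Bool × Fin n) ⊕ Option (Bool × Fin (n - 1)) → Fsp p n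
  | .inl i => ⟨normalFormFst (sqRep c i),
      P1.red_ne_red_iff_transverse.2 (transverse_normalFormFst _)⟩
  | .inr j => ⟨normalFormSnd (sqRep c (liftNonunitIdx j)),
      P1.red_ne_red_iff_transverse.2 (transverse_normalFormSnd _)⟩

theorem exists_borelRep_orbitRel (hp2 : p ≠ 2) {c : ZMod (p ^ n)} (hc : ¬IsSquare (ρ c))
    (x : Fsp p n) :
    ∃ i, MulAction.orbitRel (Gamma0 (ZMod (p ^ n))) (Fsp p n) (borelRep c i) x := by
  simp only [Fsp.orbitRel_iff]
  obtain ⟨⟨P, Q⟩, hPQ⟩ := x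
  have hT : P.Transverse Q := P1.red_ne_red_iff_transverse.1 hPQ
  obtain ⟨a, i, ht⟩ := exists_eq_sq_mul_sqRep hp2 hc (P.borelInv Q)
  by_cases hP : P.IsUnitSnd
  · obtain ⟨g, hg⟩ := exists_smul_eq_normalFormFst hP hT
    refine ⟨.inl i, Gamma0.upper a 0 * g, ?_⟩
    rw [mul_smul, hg, ht, upper_smul_normalFormFst]
    rfl
  · obtain ⟨g, hg⟩ := exists_smul_eq_normalFormSnd (hT.isUnitSnd_right hP) hT
    have hi : ¬IsUnit (sqRep c i) := fun h =>
      P1.not_isUnit_borelInv hP Q (ht ▸ (a ^ 2).isUnit.mul h)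
    obtain ⟨j, rfl⟩ := exists_liftNonunitIdx_eq hc hi
    refine ⟨.inr j, Gamma0.upper a 0 * g, ?_⟩
    rw [mul_smul, hg, ht, upper_smul_normalFormSnd]
    rfl

theorem eq_of_smul_borelRep_eq {c : ZMod (p ^ n)} (hc : ¬IsSquare (ρ c))
    {i i' : Option (Bool × Fin n) ⊕ Option (Bool × Fin (n - 1))} (g : Gamma0 (ZMod (p ^ n)))
    (h : g • (borelRep c i').1 = (borelRep c i).1) : i = i' := by
  set a := (Gamma0.isUnit_apply_one_one g).unit
  have hinv : (borelRep c i).1.1.borelInv (borelRep c i).1.2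
      = (a : ZMod (p ^ n)) ^ 2 * (borelRep c i').1.1.borelInv (borelRep c i').1.2 := by
    rw [← h]
    exact P1.borelInv_smul g _ _
  have hflag : (borelRep c i).1.1.IsUnitSnd ↔ (borelRep c i').1.1.IsUnitSnd := by
    rw [← h]
    exact P1.isUnitSnd_smul g _
  rcases i with i | j <;> rcases i' with i' | j' <;>
    simp only [borelRep, borelInv_normalFormFst, borelInv_normalFormSnd] at hinv hflag
  · exact congrArg Sum.inl (eq_of_sq_mul_sqRep_eq hc a hinv.symm).symm
  · exact absurd ((isUnitSnd_normalFormSnd_fst _).1 (hflag.1 (isUnitSnd_normalFormFst_fst _)))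
      (not_isUnit_sqRep_liftNonunitIdx c j')
  · exact absurd ((isUnitSnd_normalFormSnd_fst _).1 (hflag.2 (isUnitSnd_normalFormFst_fst _)))
      (not_isUnit_sqRep_liftNonunitIdx c j)
  · exact congrArg Sum.inr (liftNonunitIdx_injective (eq_of_sq_mul_sqRep_eq hc a hinv.symm).symm)

theorem borelRep_bijective (hp2 : p ≠ 2) {c : ZMod (p ^ n)} (hc : ¬IsSquare (ρ c)) :
    Function.Bijective fun i => (Quotient.mk _ (borelRep c i) :
      MulAction.orbitRel.Quotient (Gamma0 (ZMod (p ^ n))) (Fsp p n)) := by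
  refine ⟨fun i i' h => ?_, fun x => ?_⟩
  · obtain ⟨g, hg⟩ := Fsp.orbitRel_iff.1 (Quotient.exact h)
    exact eq_of_smul_borelRep_eq hc g hg
  · induction x using Quotient.ind with
    | _ x =>
      obtain ⟨i, hi⟩ := exists_borelRep_orbitRel hp2 hc x
      exact ⟨i, Quotient.sound hi⟩

end PrimePower

/-- For an odd prime `p` and `n ≥ 1`, the Borel subgroup `Γ₀(ℤ/pⁿℤ)` has exactly `4n`
orbits on the set of pairs of points of `ℙ¹(ℤ/pⁿℤ)` with distinct reductions mod `p`. -/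
theorem card_borel_orbits_Fsp (p : ℕ) [Fact p.Prime] (hp2 : p ≠ 2) (n : ℕ) [NeZero n] :
    Nat.card (MulAction.orbitRel.Quotient (Gamma0 (ZMod (p ^ n))) (Fsp p n)) = 4 * n := by
  obtain ⟨c, hc⟩ := exists_not_isSquare_castHom (n := n) hp2
  rw [← Nat.card_eq_of_bijective _ (borelRep_bijective hp2 hc), Nat.card_eq_fintype_card]
  simp only [Fintype.card_sum, Fintype.card_option, Fintype.card_prod, Fintype.card_bool,
    Fintype.card_fin]
  have := NeZero.ne n
  omega
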